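/- arXiv:2007.03187 — 4 statements merged into one kernel-verified Lean document; each statement's English description precedes it below -/
import Mathlib

section
/- Let $u(t)$ solve $u' = 2e^{u/m}(u - m)$ with $u(0) = R_0^2 > m$. Then for all $t$ in the maximal interval of existence, $t \leq T_2 := \frac{m}{2(R_0^2 - m)} e^{-R_0^2/m}$, and $u(t) \to +\infty$ as $t \to T_2$. -/
/-!
Since `u(0) > m`, the right-hand side is positive as long as `u ≥ u(0)`, so `u` never drops
below `R₀²`. The substitution `v = e^{-u/m}` linearises the equation: `v' = -(2/m)(u - m)`, hence
`v' ≤ -2(R₀² - m)/m` and `0 < v(t) ≤ (2(R₀² - m)/m) (T₂ - t)`. Positivity of `v` forces `t < T₂`,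
and if the solution lives up to `T₂` then `u = -m log v ≥ -m log((2(R₀² - m)/m)(T₂ - t)) → ∞`.
-/

open Real Set Filter Topology

theorem le_of_hasDerivAt_pos_of_eq {u u' : ℝ → ℝ} {a δ t : ℝ} (hu0 : u 0 = a)
    (hderiv : ∀ s ∈ Ico (0 : ℝ) δ, HasDerivAt u (u' s) s)
    (hpos : ∀ s ∈ Ico (0 : ℝ) δ, u s = a → 0 < u' s) (ht : t ∈ Ico 0 δ) : a ≤ u t := by
  have hsub : Icc 0 t ⊆ Ico 0 δ := Icc_subset_Ico_right ht.2
  refine image_le_of_deriv_right_lt_deriv_boundary' (f' := 0) continuousOn_const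
    (fun _ _ => hasDerivWithinAt_const _ _ _) hu0.ge
    (fun s hs => (hderiv s (hsub hs)).continuousAt.continuousWithinAt)
    (fun s hs => (hderiv s (hsub (Ico_subset_Icc_self hs))).hasDerivWithinAt)
    (fun s hs heq => hpos s (hsub (Ico_subset_Icc_self hs)) heq.symm) ⟨ht.1, le_rfl⟩

theorem hasDerivAt_exp_neg_div {m t : ℝ} {u : ℝ → ℝ} (hm : m ≠ 0)
    (h : HasDerivAt u (2 * exp (u t / m) * (u t - m)) t) :
    HasDerivAt (fun s => exp (-u s / m)) (-(2 / m * (u t - m))) t :=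
  (h.neg.div_const m).exp.congr_deriv <| by
    rw [Pi.neg_apply, neg_div, exp_neg]
    field_simp

section

variable {m R0sq δ : ℝ} {u : ℝ → ℝ}

theorem initial_le_of_hasDerivAt_ode (hR0 : m < R0sq) (hu0 : u 0 = R0sq)
    (hode : ∀ t ∈ Ico (0 : ℝ) δ, HasDerivAt u (2 * exp (u t / m) * (u t - m)) t)
    {t : ℝ} (ht : t ∈ Ico 0 δ) : R0sq ≤ u t :=
  le_of_hasDerivAt_pos_of_eq hu0 hode (fun s _ hs => by
    have : 0 < u s - m := by linarith
    positivity) ht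

theorem exp_neg_div_le_of_hasDerivAt_ode (hm : 0 < m) (hR0 : m < R0sq) (hu0 : u 0 = R0sq)
    (hode : ∀ t ∈ Ico (0 : ℝ) δ, HasDerivAt u (2 * exp (u t / m) * (u t - m)) t)
    {t : ℝ} (ht : t ∈ Ico 0 δ) :
    exp (-u t / m) ≤ 2 * (R0sq - m) / m * (m / (2 * (R0sq - m)) * exp (-R0sq / m) - t) := by
  have hsub : Icc 0 t ⊆ Ico 0 δ := Icc_subset_Ico_right ht.2
  have hv := fun s (hs : s ∈ Icc 0 t) => hasDerivAt_exp_neg_div hm.ne' (hode s (hsub hs))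
  have hR0m : R0sq - m ≠ 0 := by linarith
  refine image_le_of_deriv_right_le_deriv_boundary
    (B := fun s => 2 * (R0sq - m) / m * (m / (2 * (R0sq - m)) * exp (-R0sq / m) - s))
    (fun s hs => (hv s hs).continuousAt.continuousWithinAt)
    (fun s hs => (hv s (Ico_subset_Icc_self hs)).hasDerivWithinAt)
    (le_of_eq (by rw [hu0, sub_zero]; field_simp)) (by fun_prop)
    (fun s _ => ((hasDerivAt_id' s).const_sub _).const_mul _ |>.hasDerivWithinAt) ?_
    ⟨ht.1, le_rfl⟩
  intro s hs
  have := initial_le_of_hasDerivAt_ode hR0 hu0 hode (hsub (Ico_subset_Icc_self hs))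
  have : 2 / m * (R0sq - m) ≤ 2 / m * (u s - m) := by gcongr
  field_simp at this ⊢
  linarith

end

theorem tendsto_neg_mul_log_mul_sub_nhdsLT_atTop {m C T : ℝ} (hm : 0 < m) (hC : 0 < C) :
    Tendsto (fun t => -m * log (C * (T - t))) (𝓝[<] T) atTop := by
  have hlin : Tendsto (fun t => C * (T - t)) (𝓝[<] T) (𝓝[>] 0) := by
    refine tendsto_nhdsWithin_iff.2 ⟨?_, ?_⟩
    · exact ((continuous_const.mul (continuous_const.sub continuous_id)).tendsto' T 0
        (by simp)).mono_left nhdsWithin_le_nhds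
    · filter_upwards [self_mem_nhdsWithin] with t (ht : t < T)
      exact mul_pos hC (sub_pos.2 ht)
  exact (tendsto_log_nhdsGT_zero.comp hlin).const_mul_atBot_of_neg (neg_neg_of_pos hm)

theorem neg_mul_log_le_of_exp_neg_div_le {m x y : ℝ} (hm : 0 < m) (hy : 0 < y)
    (h : exp (-x / m) ≤ y) : -m * log y ≤ x := by
  rw [← le_log_iff_exp_le hy, div_le_iff₀ hm] at h
  linarith

theorem sphere_expands_to_infinity_general (m R0sq δ : ℝ) (hm : 0 < m) (hR0 : m < R0sq)
    (u : ℝ → ℝ) (hu0 : u 0 = R0sq)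
    (hode : ∀ t ∈ Ico (0 : ℝ) δ, HasDerivAt u (2 * exp (u t / m) * (u t - m)) t) :
    δ ≤ m / (2 * (R0sq - m)) * exp (-R0sq / m) ∧
      (δ = m / (2 * (R0sq - m)) * exp (-R0sq / m) →
        Tendsto u (𝓝[<] δ) atTop) := by
  have hC : 0 < 2 * (R0sq - m) / m := div_pos (by linarith) hm
  have hbound := fun t (ht : t ∈ Ico 0 δ) => exp_neg_div_le_of_hasDerivAt_ode hm hR0 hu0 hode ht
  have hbound_pos := fun t (ht : t ∈ Ico 0 δ) => (exp_pos _).trans_le (hbound t ht)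
  refine ⟨le_of_not_gt fun hlt => ?_, ?_⟩
  · simpa using hbound_pos _ ⟨by positivity, hlt⟩
  · rintro rfl
    refine tendsto_atTop_mono' _ ?_ (tendsto_neg_mul_log_mul_sub_nhdsLT_atTop hm hC)
    filter_upwards [Ico_mem_nhdsLT (by positivity)] with t ht
    exact neg_mul_log_le_of_exp_neg_div_le hm (hbound_pos t ht) (hbound t ht)

/-- The solution of `u' = 2 e^{u/m}(u - m)` with `u(0) = R₀² > m` satisfies
`δ ≤ T₂ = m e^{-R₀²/m} / (2(R₀² - m))` on its interval of existence `[0, δ)`,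
and if it exists on all of `[0, T₂)` then `u(t) → +∞` as `t → T₂`. -/
theorem sphere_expands_to_infinity (m R0sq δ : ℝ) (hm : 0 < m) (hR0 : m < R0sq)
    (hδ : 0 < δ) (u : ℝ → ℝ) (hu0 : u 0 = R0sq)
    (hode : ∀ t ∈ Ico (0 : ℝ) δ, HasDerivAt u (2 * exp (u t / m) * (u t - m)) t) :
    δ ≤ m / (2 * (R0sq - m)) * exp (-R0sq / m) ∧
      (δ = m / (2 * (R0sq - m)) * exp (-R0sq / m) →
        Tendsto u (𝓝[<] δ) atTop) :=
  sphere_expands_to_infinity_general m R0sq δ hm hR0 u hu0 hode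
end

section
/- Let $u$ solve $u' = 2e^{u/m}(u-m)$, $u(0)=R_0^2 < m$, on $[0,\delta)$. Then for all $t \in [0,\delta)$, $e^{-u(t)/m} \geq \frac{2(m - R_0^2)}{m} t + e^{-R_0^2/m}$, equivalently $u(t) \leq -m \log\big(\frac{2(m-R_0^2)}{m} t + e^{-R_0^2/m}\big)$. -/
open Real Set

/-!
Along the flow, `e^{-u/m}` has derivative `2(m - u)/m`. The flow is decreasing because `u < m`,
so `u ≤ u(0) = R₀²` and this derivative is at least `2(m - R₀²)/m`; integrating from `0` gives
the lower barrier for `e^{-u/m}`, and taking logarithms gives the upper bound for `u`.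
-/

theorem Convex.mul_sub_le_image_sub_of_le_hasDerivAt {D : Set ℝ} (hD : Convex ℝ D)
    {f f' : ℝ → ℝ} (hf : ∀ x ∈ D, HasDerivAt f (f' x) x) {C : ℝ} (hC : ∀ x ∈ D, C ≤ f' x)
    {x y : ℝ} (hx : x ∈ D) (hy : y ∈ D) (hxy : x ≤ y) : C * (y - x) ≤ f y - f x :=
  hD.mul_sub_le_image_sub_of_le_deriv (fun z hz ↦ (hf z hz).continuousAt.continuousWithinAt)
    (fun z hz ↦ (hf z (interior_subset hz)).differentiableAt.differentiableWithinAt)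
    (fun z hz ↦ (hf z (interior_subset hz)).deriv ▸ hC z (interior_subset hz)) x hx y hy hxy

theorem Convex.antitoneOn_of_hasDerivAt_nonpos {D : Set ℝ} (hD : Convex ℝ D)
    {f f' : ℝ → ℝ} (hf : ∀ x ∈ D, HasDerivAt f (f' x) x) (hf' : ∀ x ∈ D, f' x ≤ 0) :
    AntitoneOn f D :=
  antitoneOn_of_hasDerivWithinAt_nonpos hD (fun z hz ↦ (hf z hz).continuousAt.continuousWithinAt)
    (fun z hz ↦ (hf z (interior_subset hz)).hasDerivWithinAt)
    (fun z hz ↦ hf' z (interior_subset hz))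

section Flow

variable {m : ℝ} {u : ℝ → ℝ}

theorem hasDerivAt_exp_neg_div_of_flow {t : ℝ}
    (hu : HasDerivAt u (2 * exp (u t / m) * (u t - m)) t) :
    HasDerivAt (fun s ↦ exp (-u s / m)) (2 * (m - u t) / m) t := by
  have hexponent : HasDerivAt (fun s ↦ -u s / m) (-(2 * exp (u t / m) * (u t - m)) / m) t :=
    hu.neg.div_const m
  convert hexponent.exp using 1
  have hinv : exp (-u t / m) * exp (u t / m) = 1 := by
    rw [← exp_add, neg_div, neg_add_cancel, exp_zero]
  rw [show exp (-u t / m) * (-(2 * exp (u t / m) * (u t - m)) / m)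
      = exp (-u t / m) * exp (u t / m) * (2 * (m - u t) / m) by ring, hinv, one_mul]

theorem antitoneOn_of_flow {D : Set ℝ} (hD : Convex ℝ D)
    (hode : ∀ t ∈ D, HasDerivAt u (2 * exp (u t / m) * (u t - m)) t)
    (hlt : ∀ t ∈ D, u t < m) : AntitoneOn u D :=
  hD.antitoneOn_of_hasDerivAt_nonpos hode fun t ht ↦
    mul_nonpos_of_nonneg_of_nonpos (by positivity) (sub_nonpos.2 (hlt t ht).le)

end Flow

theorem le_neg_mul_log_of_le_exp_neg_div {m a x : ℝ} (hm : 0 < m) (hx : 0 < x)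
    (h : x ≤ exp (-a / m)) : a ≤ -m * log x := by
  have hlog : log x ≤ -a / m := (log_le_iff_le_exp hx).2 h
  rw [le_div_iff₀ hm] at hlog
  linarith

theorem exp_barrier_below_general (m R0sq δ : ℝ) (hm : 0 < m) (hRm : R0sq < m)
    (u : ℝ → ℝ) (hu0 : u 0 = R0sq) (hrange : ∀ t ∈ Ico (0 : ℝ) δ, u t ∈ Ioo 0 m)
    (hode : ∀ t ∈ Ico (0 : ℝ) δ, HasDerivAt u (2 * exp (u t / m) * (u t - m)) t) :
    ∀ t ∈ Ico (0 : ℝ) δ,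
      exp (-u t / m) ≥ 2 * (m - R0sq) / m * t + exp (-R0sq / m) ∧
      u t ≤ -m * Real.log (2 * (m - R0sq) / m * t + exp (-R0sq / m)) := by
  intro t ht
  have h0 : (0 : ℝ) ∈ Ico 0 δ := ⟨le_rfl, ht.1.trans_lt ht.2⟩
  have hanti : AntitoneOn u (Ico 0 δ) :=
    antitoneOn_of_flow (convex_Ico 0 δ) hode fun s hs ↦ (hrange s hs).2
  have hslope : ∀ s ∈ Ico (0 : ℝ) δ, 2 * (m - R0sq) / m ≤ 2 * (m - u s) / m := fun s hs ↦ by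
    have hus : u s ≤ R0sq := hu0 ▸ hanti h0 hs hs.1
    gcongr
  have hbarrier := (convex_Ico 0 δ).mul_sub_le_image_sub_of_le_hasDerivAt
    (fun s hs ↦ hasDerivAt_exp_neg_div_of_flow (hode s hs)) hslope h0 ht ht.1
  rw [hu0, sub_zero] at hbarrier
  have hexp : exp (-u t / m) ≥ 2 * (m - R0sq) / m * t + exp (-R0sq / m) := by linarith
  have hpos : 0 < 2 * (m - R0sq) / m * t + exp (-R0sq / m) :=
    add_pos_of_nonneg_of_pos
      (mul_nonneg (div_nonneg (by linarith) hm.le) ht.1) (exp_pos _)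
  exact ⟨hexp, le_neg_mul_log_of_le_exp_neg_div hm hpos hexp⟩

/-- Explicit lower barrier for `e^{-u/m}` along the flow `u' = 2 e^{u/m}(u-m)`
when `u(0) = R₀² < m`. -/
theorem exp_barrier_below (m R0sq δ : ℝ) (hm : 0 < m) (hR0 : 0 < R0sq) (hRm : R0sq < m)
    (u : ℝ → ℝ) (hu0 : u 0 = R0sq) (hrange : ∀ t ∈ Ico (0 : ℝ) δ, u t ∈ Ioo 0 m)
    (hode : ∀ t ∈ Ico (0 : ℝ) δ, HasDerivAt u (2 * exp (u t / m) * (u t - m)) t) :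
    ∀ t ∈ Ico (0 : ℝ) δ,
      exp (-u t / m) ≥ 2 * (m - R0sq) / m * t + exp (-R0sq / m) ∧
      u t ≤ -m * Real.log (2 * (m - R0sq) / m * t + exp (-R0sq / m)) :=
  exp_barrier_below_general m R0sq δ hm hRm u hu0 hrange hode
end

section
/- Under the modified flow with constants $a, b, c > 0$, a sphere of radius $R$ evolves by $(R^2)' = 2e^{aR^2/m}(bR^2 - mc)$. If $bR_0^2 < mc$, then for all $t$ in the (maximal) domain of the solution, $t \leq T_1 := \frac{m}{2ab\big(\frac{c}{b}m - R_0^2\big)}\big(1 - e^{-aR_0^2/m}\big)$. -/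
/-!
Below the equilibrium `R² = (c/b) m` the flow is strictly decreasing, so `R²` never rises above
`R₀²`. Then `v = exp(-a R²/m)` satisfies
`v' = (2ab/m)((c/b) m - R²) ≥ (2ab/m)((c/b) m - R₀²)`, so `v` grows at least linearly from
`v(0) = exp(-a R₀²/m)`, while `v ≤ 1` because `R² ≥ 0`.
This caps the existence time at `T₁`.
-/

open Real Set

section Fencing

variable {u u' : ℝ → ℝ} {t₀ δ : ℝ}

theorem continuousOn_Icc_of_hasDerivAt_Ico {t : ℝ} (ht : t ∈ Ico t₀ δ)
    (hu : ∀ s ∈ Ico t₀ δ, HasDerivAt u (u' s) s) : ContinuousOn u (Icc t₀ t) := fun s hs =>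
  (hu s (Set.Icc_subset_Ico_right ht.2 hs)).continuousAt.continuousWithinAt

/-- The constant `u t₀` is a strict upper fence: wherever `u` touches it, `u` is decreasing. -/
theorem le_initial_of_hasDerivAt_autonomous {g : ℝ → ℝ}
    (hu : ∀ t ∈ Ico t₀ δ, HasDerivAt u (g (u t)) t) (hg : g (u t₀) < 0) :
    ∀ t ∈ Ico t₀ δ, u t ≤ u t₀ := fun t ht =>
  have hIcc : Icc t₀ t ⊆ Ico t₀ δ := Set.Icc_subset_Ico_right ht.2
  image_le_of_deriv_right_lt_deriv_boundary (f := u) (f' := fun s => g (u s))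
    (B := fun _ => u t₀) (B' := fun _ => 0)
    (continuousOn_Icc_of_hasDerivAt_Ico ht hu)
    (fun s hs => (hu s (hIcc (Ico_subset_Icc_self hs))).hasDerivWithinAt)
    le_rfl (fun _ => hasDerivAt_const _ (u t₀)) (fun s _ hs => by simpa only [hs])
    ⟨ht.1, le_rfl⟩

theorem add_mul_sub_le_of_le_deriv {K : ℝ} (hu : ∀ t ∈ Ico t₀ δ, HasDerivAt u (u' t) t)
    (hK : ∀ t ∈ Ico t₀ δ, K ≤ u' t) :
    ∀ t ∈ Ico t₀ δ, u t₀ + K * (t - t₀) ≤ u t := by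
  intro t ht
  have hIcc : Icc t₀ t ⊆ Ico t₀ δ := Set.Icc_subset_Ico_right ht.2
  have hline (s : ℝ) : HasDerivAt (fun s => u t₀ + K * (s - t₀)) K s := by
    simpa using (((hasDerivAt_id s).sub_const t₀).const_mul K).const_add (u t₀)
  refine image_le_of_deriv_right_le_deriv_boundary
    (fun s _ => (hline s).continuousAt.continuousWithinAt)
    (fun s _ => (hline s).hasDerivWithinAt) (by simp) (continuousOn_Icc_of_hasDerivAt_Ico ht hu)
    (fun s hs => (hu s (hIcc (Ico_subset_Icc_self hs))).hasDerivWithinAt)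
    (fun s hs => hK s (hIcc (Ico_subset_Icc_self hs))) ⟨ht.1, le_rfl⟩

end Fencing

theorem le_of_forall_mem_Ico_le {α : Type*} [LinearOrder α] [DenselyOrdered α] {a δ T : α}
    (hT : a ≤ T) (h : ∀ t ∈ Ico a δ, t ≤ T) : δ ≤ T :=
  le_of_forall_lt_imp_le_of_dense fun t ht =>
    (le_or_gt a t).elim (fun hat => h t ⟨hat, ht⟩) fun hta => hta.le.trans hT

theorem hasDerivAt_exp_of_modified_flow {m a b c t : ℝ} {u : ℝ → ℝ} (hm : m ≠ 0)
    (hb : b ≠ 0)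
    (hu : HasDerivAt u (2 * exp (a * u t / m) * (b * u t - m * c)) t) :
    HasDerivAt (fun s => exp (-(a * u s) / m)) (2 * a * b * (c / b * m - u t) / m) t := by
  have h := ((hu.const_mul (-a)).div_const m).exp
  simp only [neg_mul] at h
  convert h using 1
  have hcancel : exp (-(a * u t) / m) * exp (a * u t / m) = 1 := by
    rw [← exp_add, neg_div, neg_add_cancel, exp_zero]
  field_simp at hcancel ⊢
  linear_combination a * (b * u t - m * c) * hcancel

theorem modified_flow_shrinking_time_bound_general (m a b c R0sq δ : ℝ) (hm : 0 < m)
    (ha : 0 < a) (hb : 0 < b) (hR0 : 0 ≤ R0sq) (hRm : R0sq < c / b * m)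
    (u : ℝ → ℝ) (hu0 : u 0 = R0sq) (hnonneg : ∀ t ∈ Ico (0 : ℝ) δ, 0 ≤ u t)
    (hode : ∀ t ∈ Ico (0 : ℝ) δ,
      HasDerivAt u (2 * exp (a * u t / m) * (b * u t - m * c)) t) :
    δ ≤ m / (2 * a * b * (c / b * m - R0sq)) * (1 - exp (-(a * R0sq) / m)) := by
  set K := 2 * a * b * (c / b * m - R0sq) / m
  have hK : 0 < K := div_pos (mul_pos (by positivity) (sub_pos.2 hRm)) hm
  have hexp_le_one (x : ℝ) (hx : 0 ≤ x) : exp (-(a * x) / m) ≤ 1 :=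
    exp_le_one_iff.2 (div_nonpos_of_nonpos_of_nonneg (by nlinarith) hm.le)
  have hRm' : b * R0sq < m * c := by
    rw [div_mul_eq_mul_div, lt_div_iff₀ hb] at hRm
    linarith
  have hbelow : ∀ t ∈ Ico 0 δ, u t ≤ R0sq := hu0 ▸ le_initial_of_hasDerivAt_autonomous
    (g := fun x => 2 * exp (a * x / m) * (b * x - m * c)) hode
    (mul_neg_of_pos_of_neg (by positivity) (by rw [hu0]; linarith))
  have hgrowth : ∀ t ∈ Ico 0 δ, exp (-(a * R0sq) / m) + K * t ≤ exp (-(a * u t) / m) := by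
    simpa only [hu0, sub_zero] using add_mul_sub_le_of_le_deriv (K := K)
      (fun s hs => hasDerivAt_exp_of_modified_flow hm.ne' hb.ne' (hode s hs))
      (fun s hs => by simp only [K]; gcongr; exact hbelow s hs)
  have hT₁ : m / (2 * a * b * (c / b * m - R0sq)) * (1 - exp (-(a * R0sq) / m)) =
      (1 - exp (-(a * R0sq) / m)) / K := by
    simp only [K, div_div_eq_mul_div, div_mul_eq_mul_div, mul_comm]
  rw [hT₁]
  refine le_of_forall_mem_Ico_le (div_nonneg (sub_nonneg.2 (hexp_le_one R0sq hR0)) hK.le)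
    fun t ht => (le_div_iff₀' hK).2 ?_
  linarith [hgrowth t ht, hexp_le_one (u t) (hnonneg t ht)]

/-- For the modified flow with constants `a, b, c > 0`, a sphere of radius `R`
evolves by `(R²)' = 2 e^{aR²/m}(bR² - mc)`. If `bR₀² < mc`, the existence time is
at most `T₁ = m (1 - e^{-aR₀²/m}) / (2ab((c/b)m - R₀²))`. -/
theorem modified_flow_shrinking_time_bound (m a b c R0sq δ : ℝ) (hm : 0 < m)
    (ha : 0 < a) (hb : 0 < b) (hc : 0 < c) (hR0 : 0 ≤ R0sq) (hRm : R0sq < c / b * m)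
    (u : ℝ → ℝ) (hu0 : u 0 = R0sq) (hnonneg : ∀ t ∈ Ico (0 : ℝ) δ, 0 ≤ u t)
    (hode : ∀ t ∈ Ico (0 : ℝ) δ,
      HasDerivAt u (2 * exp (a * u t / m) * (b * u t - m * c)) t) :
    δ ≤ m / (2 * a * b * (c / b * m - R0sq)) * (1 - exp (-(a * R0sq) / m)) :=
  modified_flow_shrinking_time_bound_general m a b c R0sq δ hm ha hb hR0 hRm u hu0 hnonneg hode
end

section
/- Under the modified flow with constants $a,b,c > 0$: if $bR_0^2 > mc$, then any solution $u$ of $u' = 2e^{au/m}(bu - mc)$, $u(0) = R_0^2$, satisfies $t \leq T_2 := \frac{m}{2ab\big(R_0^2 - \frac{c}{b}m\big)} e^{-aR_0^2/m}$ for all $t$ in its domain, and if the solution exists on $[0,T_2)$ then $u(t) \to +\infty$ as $t \to T_2$. -/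
open Real Set Filter Topology

/-- For the modified flow with constants `a, b, c > 0`: if `bR₀² > mc`, any
solution of `u' = 2 e^{au/m}(bu - mc)`, `u(0) = R₀²`, exists at most up to
`T₂ = m e^{-aR₀²/m} / (2ab(R₀² - (c/b)m))`, and if it exists on all of `[0, T₂)`
then `u(t) → +∞` as `t → T₂`. -/
theorem modified_flow_expanding_time_bound (m a b c R0sq δ : ℝ) (hm : 0 < m)
    (ha : 0 < a) (hb : 0 < b) (hc : 0 < c) (hR0 : c / b * m < R0sq) (hδ : 0 < δ)
    (u : ℝ → ℝ) (hu0 : u 0 = R0sq)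
    (hode : ∀ t ∈ Ico (0 : ℝ) δ,
      HasDerivAt u (2 * exp (a * u t / m) * (b * u t - m * c)) t) :
    δ ≤ m / (2 * a * b * (R0sq - c / b * m)) * exp (-(a * R0sq) / m) ∧
      (δ = m / (2 * a * b * (R0sq - c / b * m)) * exp (-(a * R0sq) / m) →
        Tendsto u (𝓝[<] δ) atTop) := by
  have hR0' : 0 < R0sq - c / b * m := by linarith
  set K : ℝ := 2 * a * b * (R0sq - c / b * m) / m with hKdef
  have hK : 0 < K := by positivity
  have hbc : b * (c / b * m) = m * c := by field_simp
  have hT2 : m / (2 * a * b * (R0sq - c / b * m)) * exp (-(a * R0sq) / m)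
      = exp (-(a * R0sq) / m) / K := by
    rw [hKdef]; field_simp
  have hcont : ∀ t ∈ Ico (0 : ℝ) δ, ContinuousAt u t := fun t ht => (hode t ht).continuousAt
  -- Claim 1 : u stays above c/b*m
  have hlow : ∀ t ∈ Ico (0 : ℝ) δ, c / b * m < u t := by
    by_contra h
    push_neg at h
    obtain ⟨t₀, ht₀, ht₀u⟩ := h
    set B : Set ℝ := {t | t ∈ Ico (0 : ℝ) δ ∧ u t ≤ c / b * m} with hBdef
    have hBne : B.Nonempty := ⟨t₀, ht₀, ht₀u⟩
    have hBbdd : BddBelow B := ⟨0, fun x hx => hx.1.1⟩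
    set t₁ := sInf B with ht₁def
    have ht₁0 : 0 ≤ t₁ := le_csInf hBne fun x hx => hx.1.1
    have ht₁δ : t₁ < δ := lt_of_le_of_lt (csInf_le hBbdd ⟨ht₀, ht₀u⟩) ht₀.2
    have ht₁mem : t₁ ∈ Ico (0 : ℝ) δ := ⟨ht₁0, ht₁δ⟩
    have ht₁u : u t₁ ≤ c / b * m := by
      by_contra hgt
      push_neg at hgt
      have hev : ∀ᶠ x in 𝓝 t₁, c / b * m < u x :=
        (hcont t₁ ht₁mem).eventually (eventually_gt_nhds hgt)
      obtain ⟨η, hη, hball⟩ := Metric.eventually_nhds_iff.mp hev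
      obtain ⟨x, hxB, hx⟩ := Real.lt_sInf_add_pos hBne hη
      have hx1 : t₁ ≤ x := csInf_le hBbdd hxB
      have : c / b * m < u x := by
        apply hball
        rw [Real.dist_eq, abs_lt]
        constructor <;> linarith
      exact absurd hxB.2 (not_le.mpr this)
    have ht₁pos : 0 < t₁ := by
      rcases lt_or_eq_of_le ht₁0 with h | h
      · exact h
      · exfalso; rw [← h, hu0] at ht₁u; linarith
    have hmono : StrictMonoOn u (Icc 0 t₁) := by
      apply strictMonoOn_of_deriv_pos (convex_Icc 0 t₁)
      · exact fun x hx =>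
          (hcont x ⟨hx.1, lt_of_le_of_lt hx.2 ht₁δ⟩).continuousWithinAt
      · intro x hx
        rw [interior_Icc] at hx
        have hxmem : x ∈ Ico (0 : ℝ) δ := ⟨hx.1.le, lt_trans hx.2 ht₁δ⟩
        have hxnB : x ∉ B := fun hxB => absurd (csInf_le hBbdd hxB) (not_le.mpr hx.2)
        have hxu : c / b * m < u x := by
          by_contra hle
          exact hxnB ⟨hxmem, not_lt.mp hle⟩
        rw [(hode x hxmem).deriv]
        have h1 : 0 < b * u x - m * c := by nlinarith
        positivity
    have : u 0 < u t₁ := hmono ⟨le_refl 0, ht₁0⟩ ⟨ht₁0, le_refl t₁⟩ ht₁pos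
    rw [hu0] at this
    linarith
  -- Claim 2 : u t ≥ R0sq
  have hmono : StrictMonoOn u (Ico 0 δ) := by
    apply strictMonoOn_of_deriv_pos (convex_Ico 0 δ)
    · exact fun x hx => (hcont x hx).continuousWithinAt
    · intro x hx
      rw [interior_Ico] at hx
      have hxmem : x ∈ Ico (0 : ℝ) δ := ⟨hx.1.le, hx.2⟩
      rw [(hode x hxmem).deriv]
      have h1 : 0 < b * u x - m * c := by nlinarith [hlow x hxmem]
      positivity
  have hge : ∀ t ∈ Ico (0 : ℝ) δ, R0sq ≤ u t := by
    intro t ht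
    rcases eq_or_lt_of_le ht.1 with h | h
    · rw [← h, hu0]
    · exact (hu0 ▸ (hmono ⟨le_refl 0, hδ⟩ ht h)).le
  -- The function g = exp(-(a/m) u) + K t is antitone
  set g : ℝ → ℝ := fun t => exp (-(a / m) * u t) + K * t with hgdef
  have hgderiv : ∀ x ∈ Ico (0 : ℝ) δ,
      HasDerivAt g (exp (-(a / m) * u x) *
        (-(a / m) * (2 * exp (a * u x / m) * (b * u x - m * c))) + K) x := by
    intro x hx
    have h1 : HasDerivAt (fun t => K * t) K x := by
      simpa using (hasDerivAt_id x).const_mul K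
    exact (((hode x hx).const_mul (-(a / m))).exp).add h1
  have hgderiv_nonpos : ∀ x ∈ Ico (0 : ℝ) δ,
      exp (-(a / m) * u x) *
        (-(a / m) * (2 * exp (a * u x / m) * (b * u x - m * c))) + K ≤ 0 := by
    intro x hx
    have he : exp (-(a / m) * u x) * exp (a * u x / m) = 1 := by
      rw [← Real.exp_add]
      have : -(a / m) * u x + a * u x / m = 0 := by ring
      rw [this, Real.exp_zero]
    have key : exp (-(a / m) * u x) *
        (-(a / m) * (2 * exp (a * u x / m) * (b * u x - m * c)))
        = -(2 * a / m) * (b * u x - m * c) := by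
      calc exp (-(a / m) * u x) *
          (-(a / m) * (2 * exp (a * u x / m) * (b * u x - m * c)))
          = (exp (-(a / m) * u x) * exp (a * u x / m)) *
            (-(a / m) * (2 * (b * u x - m * c))) := by ring
        _ = -(2 * a / m) * (b * u x - m * c) := by rw [he]; ring
    rw [key]
    have hux : R0sq ≤ u x := hge x hx
    have hKeq : K = 2 * a / m * (b * R0sq - m * c) := by
      rw [hKdef]; field_simp
    have h2 : 2 * a / m * (b * R0sq - m * c) ≤ 2 * a / m * (b * u x - m * c) := by
      apply mul_le_mul_of_nonneg_left _ (by positivity)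
      nlinarith
    linarith [hKeq ▸ h2]
  have hganti : AntitoneOn g (Ico 0 δ) := by
    apply antitoneOn_of_deriv_nonpos (convex_Ico 0 δ)
    · intro x hx
      exact ((hgderiv x hx).continuousAt).continuousWithinAt
    · intro x hx
      rw [interior_Ico] at hx
      exact ((hgderiv x ⟨hx.1.le, hx.2⟩).differentiableAt).differentiableWithinAt
    · intro x hx
      rw [interior_Ico] at hx
      have hxmem : x ∈ Ico (0 : ℝ) δ := ⟨hx.1.le, hx.2⟩
      rw [(hgderiv x hxmem).deriv]
      exact hgderiv_nonpos x hxmem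
  have hbound : ∀ t ∈ Ico (0 : ℝ) δ,
      exp (-(a / m) * u t) + K * t ≤ exp (-(a * R0sq) / m) := by
    intro t ht
    have := hganti ⟨le_refl 0, hδ⟩ ht ht.1
    have hg0 : g 0 = exp (-(a * R0sq) / m) := by
      rw [hgdef]
      simp only [hu0, mul_zero, add_zero]
      congr 1
      ring
    rw [hg0] at this
    exact this
  have hT2pos : 0 < exp (-(a * R0sq) / m) / K := by positivity
  constructor
  · rw [hT2]
    apply le_of_forall_lt
    intro x hx
    rcases lt_or_ge x 0 with h | h
    · linarith
    · have hxmem : x ∈ Ico (0 : ℝ) δ := ⟨h, hx⟩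
      have h1 := hbound x hxmem
      have h2 : 0 < exp (-(a / m) * u x) := Real.exp_pos _
      rw [lt_div_iff₀ hK]
      nlinarith
  · intro hδT
    rw [hT2] at hδT
    have hKδ : K * δ = exp (-(a * R0sq) / m) := by
      rw [hδT]; field_simp
    have hmem : Ioo (0 : ℝ) δ ∈ 𝓝[<] δ := Ioo_mem_nhdsLT_of_mem ⟨hδ, le_refl δ⟩
    -- exp(-(a/m) u t) → 0
    have hupper : Tendsto (fun t => exp (-(a * R0sq) / m) - K * t) (𝓝[<] δ)
        (𝓝 0) := by
      have : Tendsto (fun t : ℝ => exp (-(a * R0sq) / m) - K * t) (𝓝 δ)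
          (𝓝 (exp (-(a * R0sq) / m) - K * δ)) := by
        exact (tendsto_const_nhds.sub ((tendsto_id.const_mul K)))
      rw [hKδ, sub_self] at this
      exact this.mono_left nhdsWithin_le_nhds
    have hf : Tendsto (fun t => exp (-(a / m) * u t)) (𝓝[<] δ) (𝓝 0) := by
      apply tendsto_of_tendsto_of_tendsto_of_le_of_le' tendsto_const_nhds hupper
      · exact Eventually.of_forall fun t => (Real.exp_pos _).le
      · filter_upwards [hmem] with t ht
        have := hbound t ⟨ht.1.le, ht.2⟩
        linarith
    have hf0 : Tendsto (fun t => exp (-(a / m) * u t)) (𝓝[<] δ) (𝓝[>] 0) :=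
      tendsto_nhdsWithin_of_tendsto_nhds_of_eventually_within _ hf
        (Eventually.of_forall fun t => Real.exp_pos _)
    have hlog : Tendsto (fun t => Real.log (exp (-(a / m) * u t))) (𝓝[<] δ) atBot :=
      Real.tendsto_log_nhdsGT_zero.comp hf0
    have hneg : Tendsto (fun t => -Real.log (exp (-(a / m) * u t))) (𝓝[<] δ) atTop :=
      tendsto_neg_atBot_atTop.comp hlog
    have hfinal : Tendsto (fun t => m / a * (-Real.log (exp (-(a / m) * u t))))
        (𝓝[<] δ) atTop := hneg.const_mul_atTop (by positivity)
    apply hfinal.congr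
    intro t
    rw [Real.log_exp]
    field_simp
end
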